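/- arXiv:1407.4418 — 4 statements merged into one kernel-verified Lean document; each statement's English description precedes it below -/
import Mathlib

section
/- Let H be a separable Hilbert space and let K be a bounded positive semidefinite operator on H ⊕ H written in block form [[A, B], [B*, D]]. If the diagonal blocks A and D are Hilbert–Schmidt operators, then the off-diagonal block B is also Hilbert–Schmidt. -/
/-!
Compress the block operator to `span {b i | i ∈ s}` in both copies of `H`, for finite `s`. Since `A`
and `D` need not be symmetric, positivity makes only the symmetric part `M + Mᵀ` of the resulting
real block matrix `M` positive semidefinite. Writing a positive semidefinite block matrix as
`Nᵀ N` with column blocks `X`, `Y` of `N`, its blocks are `XᵀX`, `XᵀY`, `YᵀY`, and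
`‖XᵀY‖_F² = ⟪XXᵀ, YYᵀ⟫_F ≤ ‖XXᵀ‖_F ‖YYᵀ‖_F = ‖XᵀX‖_F ‖YᵀY‖_F` by Cauchy–Schwarz. So every finite
section of `∑ ‖B (b i)‖²` is at most `(∑ ‖A (b i)‖²)^(1/2) (∑ ‖D (b i)‖²)^(1/2)`.
-/

open scoped RealInnerProductSpace
open Matrix

namespace Matrix

variable {k m n : Type*} [Fintype k] [Fintype m] [Fintype n]

theorem sum_sq_transpose_mul (X : Matrix k m ℝ) (Y : Matrix k n ℝ) :
    ∑ i, ∑ j, (Xᵀ * Y) i j ^ 2 = ∑ a, ∑ b, (X * Xᵀ) a b * (Y * Yᵀ) a b := by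
  simp only [mul_apply, transpose_apply, sq, Finset.sum_mul_sum]
  simp_rw [Finset.sum_comm (γ := n) (α := k), Finset.sum_comm (γ := m) (α := k)]
  simp only [mul_mul_mul_comm (X _ _) (Y _ _)]

theorem posSemidef_add_transpose {M : Matrix n n ℝ} (hM : ∀ x, 0 ≤ x ⬝ᵥ M *ᵥ x) :
    (M + Mᵀ).PosSemidef := by
  refine .of_dotProduct_mulVec_nonneg ?_ fun x => ?_
  · simp [IsHermitian, add_comm]
  · have : x ⬝ᵥ Mᵀ *ᵥ x = x ⬝ᵥ M *ᵥ x := by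
      rw [mulVec_transpose, dotProduct_comm, dotProduct_mulVec]
    simpa [add_mulVec, dotProduct_add, this] using add_nonneg (hM x) (hM x)

theorem sum_sq_add_transpose_le (Z : Matrix n n ℝ) :
    ∑ i, ∑ j, (Z + Zᵀ) i j ^ 2 ≤ 4 * ∑ i, ∑ j, Z i j ^ 2 := by
  calc ∑ i, ∑ j, (Z + Zᵀ) i j ^ 2
      ≤ ∑ i, ∑ j, (2 * Z i j ^ 2 + 2 * Z j i ^ 2) := by
        gcongr with i _ j _
        simp only [add_apply, transpose_apply]
        nlinarith [sq_nonneg (Z i j - Z j i)]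
    _ = 4 * ∑ i, ∑ j, Z i j ^ 2 := by
        simp only [Finset.sum_add_distrib, ← Finset.mul_sum]
        rw [Finset.sum_comm (f := fun i j => Z j i ^ 2)]
        ring

theorem PosSemidef.sq_sum_sq_toBlocks₁₂_le {M : Matrix (m ⊕ n) (m ⊕ n) ℝ} (hM : M.PosSemidef) :
    (∑ i, ∑ j, M.toBlocks₁₂ i j ^ 2) ^ 2 ≤
      (∑ i, ∑ j, M.toBlocks₁₁ i j ^ 2) * ∑ i, ∑ j, M.toBlocks₂₂ i j ^ 2 := by
  classical
  obtain ⟨N, rfl⟩ : ∃ N : Matrix (m ⊕ n) (m ⊕ n) ℝ, M = Nᵀ * N := by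
    open scoped MatrixOrder Matrix.Norms.L2Operator in
    simpa [star_eq_conjTranspose] using CStarAlgebra.nonneg_iff_eq_star_mul_self.mp hM.nonneg
  set X := N.submatrix id Sum.inl
  set Y := N.submatrix id Sum.inr
  rw [show (Nᵀ * N).toBlocks₁₁ = Xᵀ * X from rfl, show (Nᵀ * N).toBlocks₁₂ = Xᵀ * Y from rfl,
    show (Nᵀ * N).toBlocks₂₂ = Yᵀ * Y from rfl, sum_sq_transpose_mul, sum_sq_transpose_mul,
    sum_sq_transpose_mul]
  simpa only [← sq, Fintype.sum_prod_type] using Finset.sum_mul_sq_le_sq_mul_sq Finset.univ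
    (fun p : (m ⊕ n) × (m ⊕ n) => (X * Xᵀ) p.1 p.2) fun p => (Y * Yᵀ) p.1 p.2

end Matrix

section Compression

variable {H : Type*} [NormedAddCommGroup H] [InnerProductSpace ℝ H] {ι κ : Type*} [Fintype κ]

def compressionMatrix (T : H →L[ℝ] H) (v : κ → H) : Matrix κ κ ℝ :=
  Matrix.of fun i j => ⟪v i, T (v j)⟫

theorem dotProduct_compressionMatrix_mulVec (T : H →L[ℝ] H) (v : κ → H) (c d : κ → ℝ) :
    c ⬝ᵥ compressionMatrix T v *ᵥ d = ⟪∑ i, c i • v i, T (∑ j, d j • v j)⟫ := by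
  simp only [dotProduct, mulVec, compressionMatrix, of_apply, map_sum, map_smul, sum_inner,
    inner_sum, real_inner_smul_left, real_inner_smul_right, Finset.mul_sum]
  rw [Finset.sum_comm]
  exact Finset.sum_congr rfl fun i _ => Finset.sum_congr rfl fun j _ => by ring

variable {A B D : H →L[ℝ] H}

theorem dotProduct_fromBlocks_compressionMatrix_mulVec_nonneg
    (hpos : ∀ x y : H, 0 ≤ ⟪A x, x⟫ + ⟪B y, x⟫ + ⟪x, B y⟫ + ⟪D y, y⟫) (v : κ → H)
    (c : κ ⊕ κ → ℝ) :
    0 ≤ c ⬝ᵥ fromBlocks (compressionMatrix A v) (compressionMatrix B v)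
      (compressionMatrix B v)ᵀ (compressionMatrix D v) *ᵥ c := by
  obtain ⟨c₁, c₂, rfl⟩ : ∃ c₁ c₂, c = Sum.elim c₁ c₂ :=
    ⟨c ∘ Sum.inl, c ∘ Sum.inr, (Sum.elim_comp_inl_inr c).symm⟩
  simp only [fromBlocks_mulVec, Sum.elim_comp_inl, Sum.elim_comp_inr, sumElim_dotProduct_sumElim,
    dotProduct_add, mulVec_transpose, dotProduct_comm c₂ (c₁ ᵥ* _), ← dotProduct_mulVec,
    dotProduct_compressionMatrix_mulVec]
  have := hpos (∑ i, c₁ i • v i) (∑ i, c₂ i • v i)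
  rw [real_inner_comm (A _), real_inner_comm (D _)]
  rw [real_inner_comm _ (B _)] at this
  linarith

theorem sq_sum_sq_compressionMatrix_le
    (hpos : ∀ x y : H, 0 ≤ ⟪A x, x⟫ + ⟪B y, x⟫ + ⟪x, B y⟫ + ⟪D y, y⟫) (v : κ → H) :
    (∑ i, ∑ j, compressionMatrix B v i j ^ 2) ^ 2 ≤
      (∑ i, ∑ j, compressionMatrix A v i j ^ 2) * ∑ i, ∑ j, compressionMatrix D v i j ^ 2 := by
  have hM := (posSemidef_add_transpose
    (dotProduct_fromBlocks_compressionMatrix_mulVec_nonneg hpos v)).sq_sum_sq_toBlocks₁₂_le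
  have hB : ∑ i, ∑ j, (compressionMatrix B v + compressionMatrix B v) i j ^ 2 =
      4 * ∑ i, ∑ j, compressionMatrix B v i j ^ 2 := by
    simp only [Matrix.add_apply, ← two_mul, mul_pow, Finset.mul_sum]
    norm_num
  simp only [fromBlocks_transpose, fromBlocks_add, toBlocks_fromBlocks₁₁, toBlocks_fromBlocks₁₂,
    toBlocks_fromBlocks₂₂, transpose_transpose, hB] at hM
  have := hM.trans (mul_le_mul (sum_sq_add_transpose_le _) (sum_sq_add_transpose_le _)
    (by positivity) (by positivity))
  linarith

theorem sq_sum_sum_inner_sq_le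
    (hpos : ∀ x y : H, 0 ≤ ⟪A x, x⟫ + ⟪B y, x⟫ + ⟪x, B y⟫ + ⟪D y, y⟫) (v : ι → H) (s : Finset ι) :
    (∑ i ∈ s, ∑ j ∈ s, ⟪v i, B (v j)⟫ ^ 2) ^ 2 ≤
      (∑ i ∈ s, ∑ j ∈ s, ⟪v i, A (v j)⟫ ^ 2) * ∑ i ∈ s, ∑ j ∈ s, ⟪v i, D (v j)⟫ ^ 2 := by
  simp only [← Finset.sum_coe_sort s]
  exact sq_sum_sq_compressionMatrix_le hpos fun i : s => v i

end Compression

section HilbertSchmidt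

variable {H : Type*} [NormedAddCommGroup H] [InnerProductSpace ℝ H] {ι : Type*}

theorem HilbertBasis.hasSum_inner_sq (b : HilbertBasis ι ℝ H) (x : H) :
    HasSum (fun i => ⟪b i, x⟫ ^ 2) (‖x‖ ^ 2) := by
  simpa only [sq, real_inner_comm (b _) x, real_inner_self_eq_norm_sq] using
    b.hasSum_inner_mul_inner x x

theorem Orthonormal.sum_sum_inner_sq_le {v : ι → H} (hv : Orthonormal ℝ v) (w : ι → H)
    (s : Finset ι) : ∑ i ∈ s, ∑ j ∈ s, ⟪v i, w j⟫ ^ 2 ≤ ∑ j ∈ s, ‖w j‖ ^ 2 := by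
  rw [Finset.sum_comm]
  gcongr with j _
  simpa only [Real.norm_eq_abs, sq_abs] using hv.sum_inner_products_le (w j)

theorem HilbertBasis.summable_norm_sq_of_sum_sum_inner_sq_le (b : HilbertBasis ι ℝ H)
    {w : ι → H} {C : ℝ} (h : ∀ s : Finset ι, ∑ i ∈ s, ∑ j ∈ s, ⟪b i, w j⟫ ^ 2 ≤ C) :
    Summable fun j => ‖w j‖ ^ 2 := by
  classical
  refine summable_of_sum_le (c := C) (fun _ => sq_nonneg _) fun t => ?_
  refine hasSum_le_of_sum_le (hasSum_sum fun j _ => b.hasSum_inner_sq (w j)) fun s => ?_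
  calc ∑ i ∈ s, ∑ j ∈ t, ⟪b i, w j⟫ ^ 2 ≤ ∑ i ∈ s ∪ t, ∑ j ∈ s ∪ t, ⟪b i, w j⟫ ^ 2 := by
        refine (Finset.sum_le_sum_of_subset_of_nonneg Finset.subset_union_left ?_).trans' ?_
        · exact fun _ _ _ => Finset.sum_nonneg fun _ _ => sq_nonneg _
        · exact Finset.sum_le_sum fun _ _ => Finset.sum_le_sum_of_subset_of_nonneg
            Finset.subset_union_right fun _ _ _ => sq_nonneg _
    _ ≤ C := h _

end HilbertSchmidt

/-- A bounded positive block operator [[A,B],[B*,D]] on H ⊕ H with Hilbert–Schmidt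
diagonal blocks has Hilbert–Schmidt off-diagonal block. Positivity is expressed as
⟨T(x,y),(x,y)⟩ = ⟪Ax,x⟫ + ⟪By,x⟫ + ⟪x,By⟫ + ⟪Dy,y⟫ ≥ 0 (using C = B*). -/
theorem stmt_0 {H : Type*} [NormedAddCommGroup H] [InnerProductSpace ℝ H]
    {ι : Type*} (b : HilbertBasis ι ℝ H)
    (A B D : H →L[ℝ] H)
    (hpos : ∀ x y : H, 0 ≤ ⟪A x, x⟫ + ⟪B y, x⟫ + ⟪x, B y⟫ + ⟪D y, y⟫)
    (hA : Summable fun i => ‖A (b i)‖ ^ 2)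
    (hD : Summable fun i => ‖D (b i)‖ ^ 2) :
    Summable fun i => ‖B (b i)‖ ^ 2 := by
  refine b.summable_norm_sq_of_sum_sum_inner_sq_le
    (C := √((∑' i, ‖A (b i)‖ ^ 2) * ∑' i, ‖D (b i)‖ ^ 2)) fun s => ?_
  have hA_le := (b.orthonormal.sum_sum_inner_sq_le (fun j => A (b j)) s).trans
    (hA.sum_le_tsum s fun _ _ => sq_nonneg _)
  have hD_le := (b.orthonormal.sum_sum_inner_sq_le (fun j => D (b j)) s).trans
    (hD.sum_le_tsum s fun _ _ => sq_nonneg _)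
  rw [Real.le_sqrt (by positivity) (by positivity)]
  exact (sq_sum_sum_inner_sq_le hpos b s).trans
    (mul_le_mul hA_le hD_le (by positivity) (tsum_nonneg fun _ => sq_nonneg _))
end

section
/- Let (Ω, P) be a probability space, G a sub-σ-algebra, and M a nonnegative integrable random variable. Let G(x) = x/(1+x). If E[M · G(E[M | G])] = E[M · G(M)] (i.e., equality holds in the Jensen-type chain combining the strict convexity of x ↦ x·G(x) and strict concavity of G), then M is almost surely equal to E[M | G], i.e., M is G-measurable (up to a null set). -/
/-!
Write `N = E[M | m]` and `G x = x / (1 + x)`. For `a, b ≥ 0`,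
`a G(a) - a G(b) - (a - b) b / (1 + b)² = (a - b)² / ((1 + a)(1 + b)²) ≥ 0`.
Evaluating at `a = M`, `b = N` and integrating, the first two terms cancel by hypothesis and
the last one vanishes because `N / (1 + N)²` is bounded and `m`-measurable, so it can be pulled
out of the conditional expectation. A nonnegative function with zero integral vanishes a.e.,
hence `M = N` a.e.
-/

open MeasureTheory

lemma mul_div_one_add_sub_eq_sq_div {a b : ℝ} (ha : 1 + a ≠ 0) (hb : 1 + b ≠ 0) :
    a * (a / (1 + a)) - a * (b / (1 + b)) - (a * (b / (1 + b) ^ 2) - b * (b / (1 + b) ^ 2))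
      = (a - b) ^ 2 / ((1 + a) * (1 + b) ^ 2) := by
  field_simp
  ring

lemma norm_div_one_add_le_one {x : ℝ} (hx : 0 ≤ x) : ‖x / (1 + x)‖ ≤ 1 := by
  rw [Real.norm_of_nonneg (by positivity), div_le_one (by positivity)]
  linarith

lemma norm_div_one_add_sq_le_one {x : ℝ} (hx : 0 ≤ x) : ‖x / (1 + x) ^ 2‖ ≤ 1 := by
  rw [Real.norm_of_nonneg (by positivity), div_le_one (by positivity)]
  nlinarith

namespace MeasureTheory

variable {Ω : Type*} {mΩ : MeasurableSpace Ω} {μ : Measure Ω}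

lemma Integrable.mul_div_one_add {X Y : Ω → ℝ} (hX : Integrable X μ) (hY : AEMeasurable Y μ)
    (hY0 : 0 ≤ᵐ[μ] Y) : Integrable (fun ω ↦ X ω * (Y ω / (1 + Y ω))) μ :=
  hX.mul_bdd (by fun_prop : AEMeasurable (fun ω ↦ Y ω / (1 + Y ω)) μ).aestronglyMeasurable
    (hY0.mono fun _ h ↦ norm_div_one_add_le_one h)

lemma Integrable.mul_div_one_add_sq {X Y : Ω → ℝ} (hX : Integrable X μ) (hY : AEMeasurable Y μ)
    (hY0 : 0 ≤ᵐ[μ] Y) : Integrable (fun ω ↦ X ω * (Y ω / (1 + Y ω) ^ 2)) μ :=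
  hX.mul_bdd (by fun_prop : AEMeasurable (fun ω ↦ Y ω / (1 + Y ω) ^ 2) μ).aestronglyMeasurable
    (hY0.mono fun _ h ↦ norm_div_one_add_sq_le_one h)

lemma integral_mul_condExp_of_bound {m : MeasurableSpace Ω} (hm : m ≤ mΩ) [IsFiniteMeasure μ]
    {f X : Ω → ℝ} (hf : StronglyMeasurable[m] f) (hX : Integrable X μ) {c : ℝ}
    (hf_bound : ∀ᵐ ω ∂μ, ‖f ω‖ ≤ c) :
    ∫ ω, f ω * μ[X|m] ω ∂μ = ∫ ω, f ω * X ω ∂μ :=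
  calc ∫ ω, f ω * μ[X|m] ω ∂μ = ∫ ω, μ[f * X|m] ω ∂μ :=
        integral_congr_ae (condExp_stronglyMeasurable_mul_of_bound hm hf hX c hf_bound).symm
    _ = ∫ ω, f ω * X ω ∂μ := integral_condExp hm

section SquareGap

variable {X Y : Ω → ℝ}

lemma sq_sub_div_ae_eq (hX0 : 0 ≤ᵐ[μ] X) (hY0 : 0 ≤ᵐ[μ] Y) :
    (fun ω ↦ X ω * (X ω / (1 + X ω)) - X ω * (Y ω / (1 + Y ω))
      - (X ω * (Y ω / (1 + Y ω) ^ 2) - Y ω * (Y ω / (1 + Y ω) ^ 2)))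
      =ᵐ[μ] fun ω ↦ (X ω - Y ω) ^ 2 / ((1 + X ω) * (1 + Y ω) ^ 2) := by
  filter_upwards [hX0, hY0] with ω (hXω : 0 ≤ X ω) (hYω : 0 ≤ Y ω)
  exact mul_div_one_add_sub_eq_sq_div (by positivity) (by positivity)

lemma integrable_sq_sub_div (hX : Integrable X μ) (hY : Integrable Y μ) (hX0 : 0 ≤ᵐ[μ] X)
    (hY0 : 0 ≤ᵐ[μ] Y) :
    Integrable (fun ω ↦ (X ω - Y ω) ^ 2 / ((1 + X ω) * (1 + Y ω) ^ 2)) μ :=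
  (((hX.mul_div_one_add hX.aemeasurable hX0).sub (hX.mul_div_one_add hY.aemeasurable hY0)).sub
    ((hX.mul_div_one_add_sq hY.aemeasurable hY0).sub
      (hY.mul_div_one_add_sq hY.aemeasurable hY0))).congr (sq_sub_div_ae_eq hX0 hY0)

lemma integral_sq_sub_condExp_div {m : MeasurableSpace Ω} (hm : m ≤ mΩ) [IsFiniteMeasure μ]
    (hX : Integrable X μ) (hX0 : 0 ≤ᵐ[μ] X) :
    ∫ ω, (X ω - μ[X|m] ω) ^ 2 / ((1 + X ω) * (1 + μ[X|m] ω) ^ 2) ∂μ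
      = ∫ ω, X ω * (X ω / (1 + X ω)) ∂μ - ∫ ω, X ω * (μ[X|m] ω / (1 + μ[X|m] ω)) ∂μ := by
  set N := μ[X|m]
  have hN0 : 0 ≤ᵐ[μ] N := condExp_nonneg hX0
  have hNint : Integrable N μ := integrable_condExp
  have hN := hNint.aemeasurable
  have hNsm : StronglyMeasurable[m] N := stronglyMeasurable_condExp
  have hpull : ∫ ω, N ω * (N ω / (1 + N ω) ^ 2) ∂μ = ∫ ω, X ω * (N ω / (1 + N ω) ^ 2) ∂μ := by
    simp_rw [mul_comm _ (_ / (1 + N _) ^ 2)]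
    refine integral_mul_condExp_of_bound (c := 1) hm (by fun_prop) hX ?_
    exact hN0.mono fun _ h ↦ norm_div_one_add_sq_le_one h
  have hXGX := hX.mul_div_one_add hX.aemeasurable hX0
  have hXGN := hX.mul_div_one_add hN hN0
  have hXc := hX.mul_div_one_add_sq hN hN0
  have hNc := hNint.mul_div_one_add_sq hN hN0
  rw [← integral_congr_ae (sq_sub_div_ae_eq hX0 hN0), integral_sub, integral_sub, integral_sub,
    hpull, sub_self, sub_zero]
  exacts [hXc, hNc, hXGX, hXGN, hXGX.sub hXGN, hXc.sub hNc]

lemma ae_eq_of_integral_sq_sub_div_eq_zero (hX0 : 0 ≤ᵐ[μ] X) (hY0 : 0 ≤ᵐ[μ] Y)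
    (hint : Integrable (fun ω ↦ (X ω - Y ω) ^ 2 / ((1 + X ω) * (1 + Y ω) ^ 2)) μ)
    (hzero : ∫ ω, (X ω - Y ω) ^ 2 / ((1 + X ω) * (1 + Y ω) ^ 2) ∂μ = 0) : X =ᵐ[μ] Y := by
  have hgap0 : 0 ≤ᵐ[μ] fun ω ↦ (X ω - Y ω) ^ 2 / ((1 + X ω) * (1 + Y ω) ^ 2) := by
    filter_upwards [hX0, hY0] with ω (hXω : 0 ≤ X ω) (hYω : 0 ≤ Y ω)
    positivity
  filter_upwards [(integral_eq_zero_iff_of_nonneg_ae hgap0 hint).mp hzero, hX0, hY0]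
    with ω hω (hXω : 0 ≤ X ω) (hYω : 0 ≤ Y ω)
  have hden : (1 + X ω) * (1 + Y ω) ^ 2 ≠ 0 := by positivity
  simpa [hden, sub_eq_zero] using hω

end SquareGap

end MeasureTheory

/-- If equality holds in the Jensen-type chain for G(x) = x/(1+x), then the nonnegative
integrable random variable M equals its conditional expectation a.s. -/
theorem stmt_1 {Ω : Type*} {mΩ : MeasurableSpace Ω} (P : Measure Ω)
    [IsProbabilityMeasure P]
    (m : MeasurableSpace Ω) (hm : m ≤ mΩ)
    (M : Ω → ℝ) (hMint : Integrable M P) (hM0 : 0 ≤ᵐ[P] M)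
    (heq : ∫ ω, M ω * ((P[M|m]) ω / (1 + (P[M|m]) ω)) ∂P
         = ∫ ω, M ω * (M ω / (1 + M ω)) ∂P) :
    M =ᵐ[P] P[M|m] := by
  have hN0 : 0 ≤ᵐ[P] P[M|m] := condExp_nonneg hM0
  refine ae_eq_of_integral_sq_sub_div_eq_zero hM0 hN0
    (integrable_sq_sub_div hMint integrable_condExp hM0 hN0) ?_
  rw [integral_sq_sub_condExp_div hm hMint hM0, heq, sub_self]
end

section
/- Let (T, ν) be a probability space, (Y_i) a sequence in L²(ν) such that ∑_{i,j}(∫ Y_i Y_j dν)² < ∞, and set K(t,s) := ∑_i Y_i(t)Y_i(s) (convergent in L²(ν⊗ν)). Suppose furthermore that for even n the 2n-index moment tensor is Hilbert–Schmidt: ∑_{i_1,…,i_n} (∫ Y_{i_1}⋯Y_{i_n} dν)² < ∞. Then ∫∫ K(t,s)ⁿ dν(t) dν(s) ≤ ∑_{i_1,…,i_n} (∫ Y_{i_1}⋯Y_{i_n} dν)² < ∞. -/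
/-!
Expanding the `n`-th power of the partial sum `K_N(t,s) = ∑_{i<N} Y_i(t) Y_i(s)` and using
Fubini, `∫∫ K_Nⁿ = ∑_{I ∈ [0,N)ⁿ} (∫ ∏ₖ Y_{I k})²`, which is at most the full sum. Since
`K_N → K` in `L²`, a subsequence converges almost everywhere, and Fatou's lemma transfers the
bound to `K`. As `K` need not be measurable, this is run for every measurable minorant `g` of
`|K|ⁿ`: the root `g^(1/n)` is a measurable minorant of `|K|`, and the part of it not yet reached
by `|K_N|` is dominated by `|K - K_N|`, hence tends to `0` in measure.
-/

open MeasureTheory Filter Topology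

open scoped ENNReal

theorem ENNReal.ofReal_pow_of_even {n : ℕ} (hn : Even n) (x : ℝ) :
    ENNReal.ofReal (x ^ n) = ‖x‖ₑ ^ n := by
  rw [← hn.pow_abs, ENNReal.ofReal_pow (abs_nonneg x), Real.enorm_eq_ofReal_abs]

theorem MeasureTheory.integrable_fintype_prod_of_memLp {α 𝕜 : Type*} [MeasurableSpace α]
    {μ : Measure α} [IsFiniteMeasure μ] [NormedCommRing 𝕜] {n : ℕ} {f : Fin n → α → 𝕜}
    (hf : ∀ k, MemLp (f k) n μ) : Integrable (fun x => ∏ k, f k x) μ := by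
  refine (MemLp.prod' fun k _ => hf k).integrable (ENNReal.one_le_inv.mpr ?_)
  simp [ENNReal.mul_inv_le_one]

section Approximation

variable {α E : Type*} [MeasurableSpace α] {μ : Measure α} [NormedAddCommGroup E]
  {p : ℝ≥0∞} {K : α → E} {f : ℕ → α → E}

theorem ae_le_liminf_enorm_of_tendsto_eLpNorm (hp : p ≠ 0)
    (hf : ∀ N, AEStronglyMeasurable (f N) μ)
    (hK : Tendsto (fun N => eLpNorm (fun x => K x - f N x) p μ) atTop (𝓝 0))
    {h : α → ℝ≥0∞} (hh : Measurable h) (hhK : ∀ x, h x ≤ ‖K x‖ₑ) :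
    ∃ φ : ℕ → ℕ, ∀ᵐ x ∂μ, h x ≤ liminf (fun j => ‖f (φ j) x‖ₑ) atTop := by
  set v : ℕ → α → ℝ := fun N x => (h x - ‖f N x‖ₑ).toReal
  have hvK : ∀ N x, ‖v N x‖ₑ ≤ ‖K x - f N x‖ₑ := fun N x => by
    rw [Real.enorm_of_nonneg ENNReal.toReal_nonneg]
    refine ENNReal.ofReal_toReal_le.trans (tsub_le_iff_right.mpr ?_)
    calc h x ≤ ‖K x‖ₑ := hhK x
      _ = ‖(K x - f N x) + f N x‖ₑ := by rw [sub_add_cancel]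
      _ ≤ ‖K x - f N x‖ₑ + ‖f N x‖ₑ := enorm_add_le _ _
  have hv : TendstoInMeasure μ v atTop 0 := by
    refine tendstoInMeasure_of_tendsto_eLpNorm hp
      (fun N => (hh.aemeasurable.sub (hf N).enorm).ennreal_toReal.aestronglyMeasurable)
      aestronglyMeasurable_const (tendsto_of_tendsto_of_tendsto_of_le_of_le
        tendsto_const_nhds hK (fun N => zero_le) fun N => eLpNorm_mono_enorm fun x => ?_)
    simpa using hvK N x
  obtain ⟨φ, -, hφ⟩ := hv.exists_seq_tendsto_ae
  refine ⟨φ, hφ.mono fun x hx => ?_⟩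
  have hdefect : Tendsto (fun j => h x - ‖f (φ j) x‖ₑ) atTop (𝓝 0) := by
    have hfin : ∀ j, h x - ‖f (φ j) x‖ₑ ≠ ∞ := fun j =>
      (tsub_le_self.trans_lt ((hhK x).trans_lt enorm_lt_top)).ne
    simpa using ((ENNReal.continuous_ofReal.tendsto 0).comp hx).congr fun j =>
      ENNReal.ofReal_toReal (hfin j)
  calc h x ≤ liminf (fun j => (h x - ‖f (φ j) x‖ₑ) + ‖f (φ j) x‖ₑ) atTop :=
        le_liminf_of_le (by isBoundedDefault) (Eventually.of_forall fun j => le_tsub_add)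
    _ = liminf (fun j => ‖f (φ j) x‖ₑ) atTop :=
        ENNReal.liminf_add_of_left_tendsto_zero hdefect _

theorem lintegral_enorm_pow_le_of_tendsto_eLpNorm (hp : p ≠ 0)
    (hf : ∀ N, AEStronglyMeasurable (f N) μ)
    (hK : Tendsto (fun N => eLpNorm (fun x => K x - f N x) p μ) atTop (𝓝 0))
    (n : ℕ) {C : ℝ≥0∞} (hC : ∀ N, ∫⁻ x, ‖f N x‖ₑ ^ n ∂μ ≤ C) :
    ∫⁻ x, ‖K x‖ₑ ^ n ∂μ ≤ C := by
  rcases eq_or_ne n 0 with rfl | hn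
  · simpa using hC 0
  rw [← iSup_lintegral_measurable_le_eq_lintegral]
  refine iSup₂_le fun g hg => iSup_le fun hgK => ?_
  have hroot : ∀ x, g x ^ (n⁻¹ : ℝ) ≤ ‖K x‖ₑ := fun x =>
    calc g x ^ (n⁻¹ : ℝ) ≤ (‖K x‖ₑ ^ n) ^ (n⁻¹ : ℝ) :=
          ENNReal.rpow_le_rpow (hgK x) (by positivity)
      _ = ‖K x‖ₑ := ENNReal.pow_rpow_inv_natCast hn _
  obtain ⟨φ, hφ⟩ := ae_le_liminf_enorm_of_tendsto_eLpNorm hp hf hK (hg.pow_const _) hroot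
  have hpow_mono : Monotone fun a : ℝ≥0∞ => a ^ n := fun _ _ hab => pow_le_pow_left₀ zero_le hab n
  calc ∫⁻ x, g x ∂μ = ∫⁻ x, (g x ^ (n⁻¹ : ℝ)) ^ n ∂μ := by
        simp only [ENNReal.rpow_inv_natCast_pow hn]
    _ ≤ ∫⁻ x, liminf (fun j => ‖f (φ j) x‖ₑ ^ n) atTop ∂μ := by
        refine lintegral_mono_ae (hφ.mono fun x hx => (hpow_mono hx).trans_eq ?_)
        exact hpow_mono.map_liminf_of_continuousAt _ (ENNReal.continuous_pow n).continuousAt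
    _ ≤ liminf (fun j => ∫⁻ x, ‖f (φ j) x‖ₑ ^ n ∂μ) atTop :=
        lintegral_liminf_le' fun j => (hf (φ j)).enorm.pow_const n
    _ ≤ C := liminf_le_of_le (by isBoundedDefault) fun b hb =>
        hb.exists.elim fun j hj => hj.trans (hC _)

end Approximation

theorem Finset.sum_mul_pow_eq_sum_piFinset {ι R : Type*} [CommSemiring R]
    (s : Finset ι) (a b : ι → R) (n : ℕ) :
    (∑ i ∈ s, a i * b i) ^ n
      = ∑ I ∈ Fintype.piFinset fun _ : Fin n => s, (∏ k, a (I k)) * ∏ k, b (I k) := by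
  rw [← Fin.prod_const, Finset.prod_univ_sum]
  exact Finset.sum_congr rfl fun I _ => Finset.prod_mul_distrib

section MomentExpansion

variable {T ι : Type*} [MeasurableSpace T] {ν : Measure T} [IsFiniteMeasure ν]
  {Y : ι → T → ℝ} {n : ℕ}

theorem integrable_sum_mul_pow (hY : ∀ i, MemLp (Y i) n ν) (s : Finset ι) :
    Integrable (fun p : T × T => (∑ i ∈ s, Y i p.1 * Y i p.2) ^ n) (ν.prod ν) := by
  simp only [Finset.sum_mul_pow_eq_sum_piFinset]
  exact integrable_finsetSum _ fun I _ =>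
    (integrable_fintype_prod_of_memLp fun k => hY (I k)).mul_prod
      (integrable_fintype_prod_of_memLp fun k => hY (I k))

theorem integral_sum_mul_pow (hY : ∀ i, MemLp (Y i) n ν) (s : Finset ι) :
    ∫ p, (∑ i ∈ s, Y i p.1 * Y i p.2) ^ n ∂(ν.prod ν)
      = ∑ I ∈ Fintype.piFinset fun _ : Fin n => s, (∫ t, ∏ k, Y (I k) t ∂ν) ^ 2 := by
  have hint : ∀ I : Fin n → ι, Integrable (fun t => ∏ k, Y (I k) t) ν := fun I =>
    integrable_fintype_prod_of_memLp fun k => hY (I k)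
  simp only [Finset.sum_mul_pow_eq_sum_piFinset]
  rw [integral_finsetSum _ fun I _ => (hint I).mul_prod (hint I)]
  refine Finset.sum_congr rfl fun I _ => ?_
  rw [integral_prod_mul (fun t => ∏ k, Y (I k) t) (fun t => ∏ k, Y (I k) t), sq]

theorem lintegral_enorm_sum_mul_pow (hn : Even n) (hY : ∀ i, MemLp (Y i) n ν) (s : Finset ι) :
    ∫⁻ p, ‖∑ i ∈ s, Y i p.1 * Y i p.2‖ₑ ^ n ∂(ν.prod ν)
      = ENNReal.ofReal (∑ I ∈ Fintype.piFinset fun _ : Fin n => s,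
          (∫ t, ∏ k, Y (I k) t ∂ν) ^ 2) := by
  simp only [← ENNReal.ofReal_pow_of_even hn]
  rw [← ofReal_integral_eq_lintegral_ofReal (integrable_sum_mul_pow hY s)
    (Eventually.of_forall fun p => hn.pow_nonneg _), integral_sum_mul_pow hY]

end MomentExpansion

theorem stmt_13_general {T : Type*} [MeasurableSpace T] (ν : Measure T) [IsProbabilityMeasure ν]
    (Y : ℕ → T → ℝ)
    (n : ℕ) (hn : Even n) (hYLn : ∀ i, MemLp (Y i) n ν)
    (K : T × T → ℝ)
    (hK : Tendsto (fun N => eLpNorm (fun p : T × T =>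
        K p - ∑ i ∈ Finset.range N, Y i p.1 * Y i p.2) 2 (ν.prod ν)) atTop (𝓝 0))
    (hHSn : Summable fun I : Fin n → ℕ => (∫ t, ∏ k, Y (I k) t ∂ν) ^ 2) :
    ∫⁻ p, ENNReal.ofReal (K p ^ n) ∂(ν.prod ν)
      ≤ ENNReal.ofReal (∑' I : Fin n → ℕ, (∫ t, ∏ k, Y (I k) t ∂ν) ^ 2) := by
  have hpartial : ∀ N, AEStronglyMeasurable
      (fun p : T × T => ∑ i ∈ Finset.range N, Y i p.1 * Y i p.2) (ν.prod ν) := fun N =>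
    Finset.aestronglyMeasurable_fun_sum _ fun i _ =>
      (hYLn i).1.comp_fst.mul (hYLn i).1.comp_snd
  simp only [ENNReal.ofReal_pow_of_even hn]
  refine lintegral_enorm_pow_le_of_tendsto_eLpNorm two_ne_zero hpartial hK n fun N => ?_
  rw [lintegral_enorm_sum_mul_pow hn hYLn]
  exact ENNReal.ofReal_le_ofReal (hHSn.sum_le_tsum _ fun I _ => sq_nonneg _)

/-- For even n, if the n-index moment tensor of (Yᵢ) is Hilbert–Schmidt, then
∫∫ K(t,s)ⁿ dν dν ≤ ∑_{i₁,…,iₙ} (∫ Y_{i₁}⋯Y_{iₙ} dν)², where K(t,s) = ∑ᵢ Yᵢ(t)Yᵢ(s)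
in L²(ν ⊗ ν). -/
theorem stmt_13 {T : Type*} [MeasurableSpace T] (ν : Measure T) [IsProbabilityMeasure ν]
    (Y : ℕ → T → ℝ) (hYmeas : ∀ i, Measurable (Y i))
    (n : ℕ) (hn : Even n) (hYLn : ∀ i, MemLp (Y i) n ν)
    (hHS2 : Summable fun ij : ℕ × ℕ => (∫ t, Y ij.1 t * Y ij.2 t ∂ν) ^ 2)
    (K : T × T → ℝ)
    (hK : Tendsto (fun N => eLpNorm (fun p : T × T =>
        K p - ∑ i ∈ Finset.range N, Y i p.1 * Y i p.2) 2 (ν.prod ν)) atTop (𝓝 0))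
    (hHSn : Summable fun I : Fin n → ℕ => (∫ t, ∏ k, Y (I k) t ∂ν) ^ 2) :
    ∫⁻ p, ENNReal.ofReal (K p ^ n) ∂(ν.prod ν)
      ≤ ENNReal.ofReal (∑' I : Fin n → ℕ, (∫ t, ∏ k, Y (I k) t ∂ν) ^ 2) :=
  stmt_13_general ν Y n hn hYLn K hK hHSn
end

section
/- Let (Ω, P) be a probability space, (f_n) and f measurable real-valued functions on Ω with f_n → f in probability, and let (M_m) be a family of random finite measures on a space T with uniformly integrable total masses {M_m[T]}. Suppose F_m : Ω × T → Ω are measurable maps such that the pushforward of P ⊗ μ under (ω,t) ↦ F_m(ω,t) is absolutely continuous with respect to P with density M_m[T] (as happens for shifted Gaussians). Then f_n ∘ F_m → f ∘ F_m in P⊗μ-probability, uniformly in m: sup_m (P⊗μ){|f_n∘F_m − f∘F_m| > ε} → 0 as n → ∞, for every ε > 0. -/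
/-!
Pulling a set `A ⊆ Ω` back along `F_m` costs, in `P ⊗ μ`-measure, the integral of the density
`M_m[T]` over (a measurable hull of) `A`. Uniform integrability of the densities makes that integral
small uniformly in `m` as soon as `P A` is small, and `P {|f_n - f| > ε} → 0` by hypothesis.
-/

open MeasureTheory Filter Topology
open scoped ENNReal

section

variable {Ω α ι κ : Type*} [MeasurableSpace Ω] [MeasurableSpace α] {P : Measure Ω}

theorem tendsto_iSup_setLIntegral_of_tendsto_measure {g : ι → Ω → ℝ≥0∞}
    (hui : ∀ δ > (0:ℝ), ∃ η > (0:ℝ), ∀ A : Set Ω, MeasurableSet A →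
      P A ≤ ENNReal.ofReal η → ∀ m, ∫⁻ ω in A, g m ω ∂P ≤ ENNReal.ofReal δ)
    {l : Filter κ} {A : κ → Set Ω} (hA : ∀ n, MeasurableSet (A n))
    (hPA : Tendsto (fun n => P (A n)) l (𝓝 0)) :
    Tendsto (fun n => ⨆ m, ∫⁻ ω in A n, g m ω ∂P) l (𝓝 0) := by
  rw [ENNReal.tendsto_nhds_zero] at hPA ⊢
  intro δ hδ
  obtain ⟨δ', hδ'pos, hδ'⟩ : ∃ δ' > (0:ℝ), ENNReal.ofReal δ' ≤ δ := by
    obtain ⟨r, -, hr, hrδ⟩ := ENNReal.lt_iff_exists_real_btwn.mp hδ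
    exact ⟨r, ENNReal.ofReal_pos.mp hr, hrδ.le⟩
  obtain ⟨η, hη, hsmall⟩ := hui δ' hδ'pos
  filter_upwards [hPA _ (ENNReal.ofReal_pos.mpr hη)] with n hn
  exact iSup_le fun m => (hsmall _ (hA n) hn m).trans hδ'

theorem measure_preimage_le_setLIntegral_toMeasurable {ν : Measure α} {F : α → Ω}
    {g : Ω → ℝ≥0∞} (hpush : ∀ B, MeasurableSet B → ν (F ⁻¹' B) = ∫⁻ ω in B, g ω ∂P)
    (A : Set Ω) : ν (F ⁻¹' A) ≤ ∫⁻ ω in toMeasurable P A, g ω ∂P :=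
  hpush _ (measurableSet_toMeasurable P A) ▸
    measure_mono (Set.preimage_mono (subset_toMeasurable P A))

theorem tendsto_iSup_measure_preimage_of_tendsto_measure {ν : ι → Measure α} {F : ι → α → Ω}
    {g : ι → Ω → ℝ≥0∞}
    (hpush : ∀ m B, MeasurableSet B → ν m (F m ⁻¹' B) = ∫⁻ ω in B, g m ω ∂P)
    (hui : ∀ δ > (0:ℝ), ∃ η > (0:ℝ), ∀ A : Set Ω, MeasurableSet A →
      P A ≤ ENNReal.ofReal η → ∀ m, ∫⁻ ω in A, g m ω ∂P ≤ ENNReal.ofReal δ)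
    {l : Filter κ} {A : κ → Set Ω} (hPA : Tendsto (fun n => P (A n)) l (𝓝 0)) :
    Tendsto (fun n => ⨆ m, ν m (F m ⁻¹' A n)) l (𝓝 0) := by
  have hhull := tendsto_iSup_setLIntegral_of_tendsto_measure hui
    (fun n => measurableSet_toMeasurable P (A n)) (by simpa only [measure_toMeasurable] using hPA)
  refine tendsto_of_tendsto_of_tendsto_of_le_of_le tendsto_const_nhds hhull
    (fun _ => bot_le) fun n => iSup_mono fun m => ?_
  exact measure_preimage_le_setLIntegral_toMeasurable (hpush m) (A n)

end

theorem stmt_18_general {Ω T ι : Type*} [MeasurableSpace Ω] [MeasurableSpace T]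
    (P : Measure Ω) (μ : Measure T)
    (f : ℕ → Ω → ℝ) (flim : Ω → ℝ)
    (hconv : TendstoInMeasure P f atTop flim)
    (M : ι → Ω → Measure T)
    (hui : ∀ δ > (0:ℝ), ∃ η > (0:ℝ), ∀ A : Set Ω, MeasurableSet A →
      P A ≤ ENNReal.ofReal η → ∀ m, ∫⁻ ω in A, M m ω Set.univ ∂P ≤ ENNReal.ofReal δ)
    (F : ι → Ω × T → Ω)
    (hpush : ∀ m (B : Set Ω), MeasurableSet B →
      (P.prod μ) (F m ⁻¹' B) = ∫⁻ ω in B, M m ω Set.univ ∂P) :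
    ∀ ε > (0:ℝ),
      Tendsto (fun n => ⨆ m, (P.prod μ) {p | ε < |f n (F m p) - flim (F m p)|})
        atTop (𝓝 0) := by
  intro ε hε
  have hbad : Tendsto (fun n => P {ω | ε < |f n ω - flim ω|}) atTop (𝓝 0) :=
    tendsto_of_tendsto_of_tendsto_of_le_of_le tendsto_const_nhds
      (tendstoInMeasure_iff_dist.mp hconv ε hε) (fun _ => bot_le)
      fun n => measure_mono fun ω (h : ε < _) => h.le
  exact tendsto_iSup_measure_preimage_of_tendsto_measure hpush hui hbad

/-- If fₙ → f in P-probability and the maps F_m push P ⊗ μ to a measure absolutely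
continuous w.r.t. P with densities M_m[T] forming a uniformly integrable family,
then fₙ ∘ F_m → f ∘ F_m in P⊗μ-probability uniformly in m. -/
theorem stmt_18 {Ω T ι : Type*} [MeasurableSpace Ω] [MeasurableSpace T]
    (P : Measure Ω) [IsProbabilityMeasure P] (μ : Measure T) [IsProbabilityMeasure μ]
    (f : ℕ → Ω → ℝ) (flim : Ω → ℝ)
    (hfmeas : ∀ n, Measurable (f n)) (hflimmeas : Measurable flim)
    (hconv : TendstoInMeasure P f atTop flim)
    (M : ι → Ω → Measure T)
    (hui : ∀ δ > (0:ℝ), ∃ η > (0:ℝ), ∀ A : Set Ω, MeasurableSet A →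
      P A ≤ ENNReal.ofReal η → ∀ m, ∫⁻ ω in A, M m ω Set.univ ∂P ≤ ENNReal.ofReal δ)
    (F : ι → Ω × T → Ω) (hF : ∀ m, Measurable (F m))
    (hpush : ∀ m (B : Set Ω), MeasurableSet B →
      (P.prod μ) (F m ⁻¹' B) = ∫⁻ ω in B, M m ω Set.univ ∂P) :
    ∀ ε > (0:ℝ),
      Tendsto (fun n => ⨆ m, (P.prod μ) {p | ε < |f n (F m p) - flim (F m p)|})
        atTop (𝓝 0) :=
  stmt_18_general P μ f flim hconv M hui F hpush
end
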